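/- arXiv:2509.17771 — 2 statements merged into one kernel-verified Lean document; each statement's English description precedes it below -/
import Mathlib

section
/- For every real number x with 1/2 ≤ x ≤ 3/4, it holds that (4/5)·f(x) ≥ (1 + 1/40)·x, i.e., the function g'(x) = −8x⁶ + (144/5)x⁵ − 36x⁴ + 16x³ − (41/40)x satisfies g'(x) ≥ 0 on [1/2, 3/4]. -/
/-- For `x ∈ [1/2, 3/4]`, `(4/5)·f(x) ≥ (1 + 1/40)·x` where
`f(x) = 20x³ − 45x⁴ + 36x⁵ − 10x⁶`, i.e.
`g'(x) = −8x⁶ + (144/5)x⁵ − 36x⁴ + 16x³ − (41/40)x ≥ 0`. -/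
theorem stmt_2 (x : ℝ) (hx0 : 1 / 2 ≤ x) (hx1 : x ≤ 3 / 4) :
    (4 / 5) * (20 * x ^ 3 - 45 * x ^ 4 + 36 * x ^ 5 - 10 * x ^ 6) ≥ (1 + 1 / 40) * x ∧
    -8 * x ^ 6 + (144 / 5) * x ^ 5 - 36 * x ^ 4 + 16 * x ^ 3 - (41 / 40) * x ≥ 0 := by
  constructor <;>
  nlinarith [sq_nonneg (x - 1/2), sq_nonneg (x - 3/4), mul_nonneg (mul_nonneg (sub_nonneg.2 hx0) (sub_nonneg.2 hx1)) (sq_nonneg (x - 1/2)), mul_nonneg (sub_nonneg.2 hx0) (sub_nonneg.2 hx1), sq_nonneg ((x-1/2)*(x-3/4)), mul_nonneg (mul_nonneg (sub_nonneg.2 hx0) (sub_nonneg.2 hx1)) (sq_nonneg x), mul_nonneg (mul_nonneg (sub_nonneg.2 hx0) (sub_nonneg.2 hx1)) (sq_nonneg (x-1))]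
end

section
/- Let n ≥ 1 be a natural number and let j₁, j₂, j₃ be independent random variables, each uniformly distributed on {1, …, n}. Then for every i with 1 ≤ i ≤ n, the probability that the median (second smallest) of j₁, j₂, j₃ equals i is (6(i−1)(n−i) + 3n − 2) / n³. -/
noncomputable def chi (k x : ℕ) : ℝ := if k ≤ x then 1 else 0
noncomputable def one' (_ : ℕ) : ℝ := 1

lemma factor3 (s : Finset ℕ) (F G H : ℕ → ℝ) :
    ∑ t ∈ s ×ˢ s ×ˢ s, F t.1 * G t.2.1 * H t.2.2
      = (∑ x ∈ s, F x) * (∑ x ∈ s, G x) * (∑ x ∈ s, H x) := by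
  rw [Finset.sum_product]
  simp_rw [Finset.sum_product]
  rw [Finset.sum_mul_sum, Finset.sum_mul_sum]
  refine Finset.sum_congr rfl fun a _ => ?_
  rw [Finset.sum_comm]
  exact Finset.sum_congr rfl fun c _ => (Finset.sum_mul ..).symm

lemma pointwise (i a b c : ℕ) :
    (if max (min a b) (min (max a b) c) = i then (1:ℝ) else 0)
    = chi i a * chi i b * one' c + one' a * chi i b * chi i c + chi i a * one' b * chi i c
      - 2 * (chi i a * chi i b * chi i c)
      - (chi (i+1) a * chi (i+1) b * one' c + one' a * chi (i+1) b * chi (i+1) c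
        + chi (i+1) a * one' b * chi (i+1) c - 2 * (chi (i+1) a * chi (i+1) b * chi (i+1) c)) := by
  simp only [chi, one']
  split_ifs <;> first | (exfalso; omega) | norm_num

lemma sum_chi (n k : ℕ) (hk : 1 ≤ k) : ∑ x ∈ Finset.Icc 1 n, chi k x = ((n + 1 - k : ℕ) : ℝ) := by
  simp only [chi, Finset.sum_boole]
  congr 1
  rw [show (Finset.Icc 1 n).filter (fun x => k ≤ x) = Finset.Icc (max 1 k) n from by
    ext x; simp only [Finset.mem_filter, Finset.mem_Icc]; omega]
  rw [Nat.card_Icc]; omega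

lemma sum_one' (n : ℕ) : ∑ x ∈ Finset.Icc 1 n, one' x = (n : ℝ) := by
  simp [one', Nat.card_Icc]

/-- For `j₁, j₂, j₃` independent uniform on `{1, …, n}`, the probability that
the median (second smallest) of the three equals `i` (for `1 ≤ i ≤ n`) is
`(6(i−1)(n−i) + 3n − 2)/n³`.  The probability is the number of favorable
triples divided by `n³`, and the median of three numbers `a, b, c` is
`max (min a b) (min (max a b) c)`. -/
theorem stmt_13 (n : ℕ) (hn : 1 ≤ n) (i : ℕ) (hi1 : 1 ≤ i) (hin : i ≤ n) :
    ((((Finset.Icc 1 n ×ˢ Finset.Icc 1 n ×ˢ Finset.Icc 1 n).filter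
        (fun t : ℕ × ℕ × ℕ =>
          max (min t.1 t.2.1) (min (max t.1 t.2.1) t.2.2) = i)).card : ℝ) / (n : ℝ) ^ 3)
      = (6 * ((i : ℝ) - 1) * ((n : ℝ) - (i : ℝ)) + 3 * (n : ℝ) - 2) / (n : ℝ) ^ 3 := by
  have hmain : (((Finset.Icc 1 n ×ˢ Finset.Icc 1 n ×ˢ Finset.Icc 1 n).filter
        (fun t : ℕ × ℕ × ℕ =>
          max (min t.1 t.2.1) (min (max t.1 t.2.1) t.2.2) = i)).card : ℝ)
      = 6 * ((i : ℝ) - 1) * ((n : ℝ) - (i : ℝ)) + 3 * (n : ℝ) - 2 := by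
    rw [← Finset.sum_boole]
    calc ∑ t ∈ Finset.Icc 1 n ×ˢ Finset.Icc 1 n ×ˢ Finset.Icc 1 n,
          (if max (min t.1 t.2.1) (min (max t.1 t.2.1) t.2.2) = i then (1:ℝ) else 0)
        = ∑ t ∈ Finset.Icc 1 n ×ˢ Finset.Icc 1 n ×ˢ Finset.Icc 1 n,
          (chi i t.1 * chi i t.2.1 * one' t.2.2 + one' t.1 * chi i t.2.1 * chi i t.2.2
            + chi i t.1 * one' t.2.1 * chi i t.2.2
            - 2 * (chi i t.1 * chi i t.2.1 * chi i t.2.2)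
            - (chi (i+1) t.1 * chi (i+1) t.2.1 * one' t.2.2
              + one' t.1 * chi (i+1) t.2.1 * chi (i+1) t.2.2
              + chi (i+1) t.1 * one' t.2.1 * chi (i+1) t.2.2
              - 2 * (chi (i+1) t.1 * chi (i+1) t.2.1 * chi (i+1) t.2.2))) :=
          Finset.sum_congr rfl fun t _ => pointwise i t.1 t.2.1 t.2.2
      _ = 6 * ((i : ℝ) - 1) * ((n : ℝ) - (i : ℝ)) + 3 * (n : ℝ) - 2 := by
          simp only [Finset.sum_sub_distrib, Finset.sum_add_distrib, ← Finset.mul_sum]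
          simp only [factor3, sum_one', sum_chi n i hi1, sum_chi n (i+1) (by omega)]
          have h1 : ((n + 1 - i : ℕ) : ℝ) = (n : ℝ) + 1 - (i : ℝ) := by
            have : i ≤ n + 1 := by omega
            push_cast [this]; ring
          have h2 : ((n + 1 - (i + 1) : ℕ) : ℝ) = (n : ℝ) - (i : ℝ) := by
            rw [show n + 1 - (i + 1) = n - i from by omega, Nat.cast_sub hin]
          rw [h1, h2]; ring
  rw [hmain]
end
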